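/- Let A = ⊕_{n≥0} A_n be a graded connected bialgebra over a field such that the reduced coproduct Δ'₂: A₂ → A₁⊗A₁ is injective. Then for every α ∈ A₃, if the component Δ'_{1,2}(α) ∈ A₁⊗A₂ of the reduced coproduct vanishes, then the component Δ'_{2,1}(α) ∈ A₂⊗A₁ also vanishes; consequently ker(Δ'_{1,2}|_{A₃}) = ker(Δ'₃). -/

import Mathlib

/-!
Because `A₀ = k·1` and the counit kills positive degrees, the extreme components of `Δx` for
`x ∈ A_n` are `1 ⊗ x` and `x ⊗ 1`. Hence `Δ'₂ = Δ_{1,1}` on `A₂` and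
`Δ'α = Δ_{1,2}α + Δ_{2,1}α` for `α ∈ A₃`. Projecting coassociativity of `Δα` onto
`A₁ ⊗ A₁ ⊗ A₁` gives `(Δ'₂ ⊗ id)(Δ_{2,1}α) = (id ⊗ Δ'₂)(Δ_{1,2}α)`. So if `Δ_{1,2}α = 0`, then
`Δ_{2,1}α = 0` because `Δ'₂ ⊗ id` is injective on `A₂ ⊗ A₁` over a field.
-/

open TensorProduct DirectSum

section GradedProj

variable {ι R M : Type*} [DecidableEq ι] [CommSemiring R] [AddCommMonoid M] [Module R M]
  (𝒜 : ι → Submodule R M) [Decomposition 𝒜]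

def gradedProj (i : ι) : M →ₗ[R] M :=
  (𝒜 i).subtype ∘ₗ component R ι (fun i => 𝒜 i) i ∘ₗ (decomposeLinearEquiv 𝒜).toLinearMap

variable {𝒜}

theorem gradedProj_mem (i : ι) (x : M) : gradedProj 𝒜 i x ∈ 𝒜 i :=
  (decompose 𝒜 x i).2

theorem gradedProj_of_mem {x : M} {i : ι} (hx : x ∈ 𝒜 i) : gradedProj 𝒜 i x = x :=
  decompose_of_mem_same 𝒜 hx

theorem gradedProj_of_mem_ne {x : M} {i j : ι} (hx : x ∈ 𝒜 i) (hij : i ≠ j) :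
    gradedProj 𝒜 j x = 0 :=
  decompose_of_mem_ne 𝒜 hx hij

theorem gradedProj_comp_subtype (i : ι) : gradedProj 𝒜 i ∘ₗ (𝒜 i).subtype = (𝒜 i).subtype :=
  LinearMap.ext fun x => gradedProj_of_mem x.2

theorem gradedProj_comp_subtype_of_ne {i j : ι} (hij : i ≠ j) :
    gradedProj 𝒜 j ∘ₗ (𝒜 i).subtype = 0 :=
  LinearMap.ext fun x => gradedProj_of_mem_ne x.2 hij

theorem map_gradedProj_mem_range (i j : ι) (t : M ⊗[R] M) :
    map (gradedProj 𝒜 i) (gradedProj 𝒜 j) t ∈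
      LinearMap.range (map (𝒜 i).subtype (𝒜 j).subtype) := by
  refine ⟨map ((gradedProj 𝒜 i).codRestrict _ (gradedProj_mem i))
    ((gradedProj 𝒜 j).codRestrict _ (gradedProj_mem j)) t, ?_⟩
  rw [← LinearMap.comp_apply, ← TensorProduct.map_comp, LinearMap.subtype_comp_codRestrict,
    LinearMap.subtype_comp_codRestrict]

end GradedProj

section TensorGrade

variable {R M N : Type*} [CommSemiring R] [AddCommMonoid M] [Module R M]
  [AddCommMonoid N] [Module R N]

def tensorGrade (𝒜 : ℕ → Submodule R M) (n : ℕ) : Submodule R (M ⊗[R] M) :=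
  ⨆ p : ℕ × ℕ, ⨆ _ : p.1 + p.2 = n, LinearMap.range (map (𝒜 p.1).subtype (𝒜 p.2).subtype)

variable {𝒜 : ℕ → Submodule R M} {n : ℕ} {t : M ⊗[R] M}

theorem tensorGrade_le_eqLocus {f g : M ⊗[R] M →ₗ[R] N}
    (h : ∀ p q, p + q = n →
      f ∘ₗ map (𝒜 p).subtype (𝒜 q).subtype = g ∘ₗ map (𝒜 p).subtype (𝒜 q).subtype) :
    tensorGrade 𝒜 n ≤ LinearMap.eqLocus f g :=
  iSup₂_le fun p hp => by
    rintro _ ⟨s, rfl⟩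
    exact LinearMap.congr_fun (h p.1 p.2 hp) s

variable [Decomposition 𝒜]

theorem map_gradedProj_left_of_mem_tensorGrade (ht : t ∈ tensorGrade 𝒜 n) (a : ℕ)
    (g : M →ₗ[R] N) :
    map (gradedProj 𝒜 a) g t = map (gradedProj 𝒜 a) (g ∘ₗ gradedProj 𝒜 (n - a)) t := by
  refine tensorGrade_le_eqLocus (fun p q hpq => ?_) ht
  rw [← TensorProduct.map_comp, ← TensorProduct.map_comp]
  rcases eq_or_ne p a with rfl | hpa
  · rw [show n - p = q by omega, LinearMap.comp_assoc, gradedProj_comp_subtype,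
      gradedProj_comp_subtype]
  · rw [gradedProj_comp_subtype_of_ne hpa, map_zero_left, map_zero_left]

theorem map_gradedProj_right_of_mem_tensorGrade (ht : t ∈ tensorGrade 𝒜 n) (b : ℕ)
    (f : M →ₗ[R] N) :
    map f (gradedProj 𝒜 b) t = map (f ∘ₗ gradedProj 𝒜 (n - b)) (gradedProj 𝒜 b) t := by
  refine tensorGrade_le_eqLocus (fun p q hpq => ?_) ht
  rw [← TensorProduct.map_comp, ← TensorProduct.map_comp]
  rcases eq_or_ne q b with rfl | hqb
  · rw [show n - q = p by omega, LinearMap.comp_assoc, gradedProj_comp_subtype,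
      gradedProj_comp_subtype]
  · rw [gradedProj_comp_subtype_of_ne hqb, map_zero_right, map_zero_right]

theorem eq_sum_map_gradedProj_of_mem_tensorGrade (ht : t ∈ tensorGrade 𝒜 n) :
    t = ∑ i ∈ Finset.range (n + 1), map (gradedProj 𝒜 i) (gradedProj 𝒜 (n - i)) t := by
  have := tensorGrade_le_eqLocus (f := LinearMap.id)
    (g := ∑ i ∈ Finset.range (n + 1), map (gradedProj 𝒜 i) (gradedProj 𝒜 (n - i)))
    (fun p q hpq => LinearMap.ext fun s => ?_) ht
  · simpa [LinearMap.sum_apply] using this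
  simp only [LinearMap.comp_apply, LinearMap.id_apply, LinearMap.sum_apply, map_map]
  rw [Finset.sum_eq_single_of_mem p (by simp; omega), show n - p = q by omega,
    gradedProj_comp_subtype, gradedProj_comp_subtype]
  intro i _ hip
  rw [gradedProj_comp_subtype_of_ne hip.symm, map_zero_left, LinearMap.zero_apply]

end TensorGrade

section Coassoc

open Coalgebra

variable {R A : Type*} [CommSemiring R] [AddCommMonoid A] [Module R A] [Coalgebra R A]
  {𝒜 : ℕ → Submodule R A} [Decomposition 𝒜]

theorem coassoc_gradedProj {α : A} {a b c : ℕ}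
    (hα : comul (R := R) α ∈ tensorGrade 𝒜 (a + b + c)) :
    TensorProduct.assoc R A A A ((map (gradedProj 𝒜 a) (gradedProj 𝒜 b) ∘ₗ comul).rTensor A
        (map (gradedProj 𝒜 (a + b)) (gradedProj 𝒜 c) (comul α))) =
      (map (gradedProj 𝒜 b) (gradedProj 𝒜 c) ∘ₗ comul).lTensor A
        (map (gradedProj 𝒜 a) (gradedProj 𝒜 (b + c)) (comul α)) := by
  have h := congrArg (map (gradedProj 𝒜 a) (map (gradedProj 𝒜 b) (gradedProj 𝒜 c)))
    (coassoc_apply (R := R) α)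
  rw [map_map_assoc, LinearMap.map_rTensor, LinearMap.map_lTensor,
    map_gradedProj_right_of_mem_tensorGrade hα, map_gradedProj_left_of_mem_tensorGrade hα,
    show a + b + c - c = a + b by omega, show a + b + c - a = b + c by omega] at h
  rwa [LinearMap.rTensor_map, LinearMap.lTensor_map]

end Coassoc

section Injective

open Coalgebra

variable {k A : Type*} [Field k] [AddCommGroup A] [Module k A] [Coalgebra k A]
  {𝒜 : ℕ → Submodule k A} [Decomposition 𝒜]

theorem map_gradedProj_comul_eq_zero_of_injective {α : A} {a b c : ℕ}
    (hinj : Function.Injective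
      (map (gradedProj 𝒜 a) (gradedProj 𝒜 b) ∘ₗ comul ∘ₗ (𝒜 (a + b)).subtype))
    (hα : comul (R := k) α ∈ tensorGrade 𝒜 (a + b + c))
    (h : map (gradedProj 𝒜 a) (gradedProj 𝒜 (b + c)) (comul α) = 0) :
    map (gradedProj 𝒜 (a + b)) (gradedProj 𝒜 c) (comul α) = 0 := by
  obtain ⟨s, hs⟩ := map_gradedProj_mem_range (𝒜 := 𝒜) (a + b) c (comul (R := k) α)
  have hzero := coassoc_gradedProj hα
  rw [h, map_zero, LinearEquiv.map_eq_zero_iff, ← hs, LinearMap.rTensor_map] at hzero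
  rw [← hs, map_injective_of_flat_flat _ _ hinj (𝒜 c).injective_subtype
    (hzero.trans (map_zero _).symm), map_zero]

end Injective

section Connected

open Coalgebra

variable {R A : Type*} [CommRing R] [Ring A] [Bialgebra R A]
  {𝒜 : ℕ → Submodule R A} [Decomposition 𝒜]

variable (R) in
def reducedComul (x : A) : A ⊗[R] A :=
  comul x - x ⊗ₜ[R] 1 - 1 ⊗ₜ[R] x

theorem reducedComul_def (x : A) :
    reducedComul R x = comul (R := R) x - x ⊗ₜ[R] 1 - 1 ⊗ₜ[R] x :=
  rfl

theorem gradedProj_zero_eq_counit_smulRight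
    (hcounit : ∀ n : ℕ, n ≠ 0 → ∀ x ∈ 𝒜 n, counit (R := R) x = 0)
    (hconn : 𝒜 0 = Submodule.span R {(1 : A)}) :
    gradedProj 𝒜 0 = (counit (R := R) (A := A)).smulRight 1 := by
  refine decompose_lhom_ext 𝒜 fun n => LinearMap.ext fun ⟨x, hx⟩ => ?_
  simp only [LinearMap.comp_apply, Submodule.subtype_apply, LinearMap.smulRight_apply]
  rcases eq_or_ne n 0 with rfl | hn
  · obtain ⟨c, rfl⟩ := Submodule.mem_span_singleton.1 (hconn ▸ hx)
    rw [gradedProj_of_mem hx, map_smul, Bialgebra.counit_one, smul_eq_mul, mul_one]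
  · rw [gradedProj_of_mem_ne hx hn, hcounit n hn x hx, zero_smul]

theorem map_gradedProj_zero_left_comul
    (hcounit : ∀ n : ℕ, n ≠ 0 → ∀ x ∈ 𝒜 n, counit (R := R) x = 0)
    (hconn : 𝒜 0 = Submodule.span R {(1 : A)}) (g : A →ₗ[R] A) (x : A) :
    map (gradedProj 𝒜 0) g (comul (R := R) x) = 1 ⊗ₜ g x := by
  have key : ∀ t : A ⊗[R] A,
      map (gradedProj 𝒜 0) g t = 1 ⊗ₜ g (TensorProduct.lid R A (counit.rTensor A t)) := by
    intro t
    induction t using TensorProduct.induction_on with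
    | zero => simp
    | tmul y z =>
      simp [gradedProj_zero_eq_counit_smulRight hcounit hconn, smul_tmul]
    | add t₁ t₂ h₁ h₂ => simp [h₁, h₂, tmul_add]
  rw [key, rTensor_counit_comul, lid_tmul, one_smul]

theorem map_gradedProj_zero_right_comul
    (hcounit : ∀ n : ℕ, n ≠ 0 → ∀ x ∈ 𝒜 n, counit (R := R) x = 0)
    (hconn : 𝒜 0 = Submodule.span R {(1 : A)}) (g : A →ₗ[R] A) (x : A) :
    map g (gradedProj 𝒜 0) (comul (R := R) x) = g x ⊗ₜ 1 := by
  have key : ∀ t : A ⊗[R] A,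
      map g (gradedProj 𝒜 0) t = g (TensorProduct.rid R A (counit.lTensor A t)) ⊗ₜ 1 := by
    intro t
    induction t using TensorProduct.induction_on with
    | zero => simp
    | tmul y z =>
      simp [gradedProj_zero_eq_counit_smulRight hcounit hconn, tmul_smul, smul_tmul']
    | add t₁ t₂ h₁ h₂ => simp [h₁, h₂, add_tmul]
  rw [key, lTensor_counit_comul, rid_tmul, one_smul]

theorem reducedComul_eq_sum
    (hcounit : ∀ n : ℕ, n ≠ 0 → ∀ x ∈ 𝒜 n, counit (R := R) x = 0)
    (hconn : 𝒜 0 = Submodule.span R {(1 : A)}) {n : ℕ} (hn : n ≠ 0) {x : A} (hx : x ∈ 𝒜 n)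
    (hΔx : comul (R := R) x ∈ tensorGrade 𝒜 n) :
    reducedComul R x =
      ∑ i ∈ Finset.Ico 1 n, map (gradedProj 𝒜 i) (gradedProj 𝒜 (n - i)) (comul x) := by
  have hsum := eq_sum_map_gradedProj_of_mem_tensorGrade hΔx
  rw [Finset.sum_range_succ, Finset.sum_range_eq_add_Ico _ (Nat.pos_of_ne_zero hn),
    Nat.sub_zero, Nat.sub_self, map_gradedProj_zero_left_comul hcounit hconn,
    map_gradedProj_zero_right_comul hcounit hconn, gradedProj_of_mem hx] at hsum
  rw [reducedComul_def]
  nth_rewrite 1 [hsum]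
  abel

end Connected

/-- In a graded connected bialgebra over a field with Δ'₂ : A₂ → A₁⊗A₁
injective, for α ∈ A₃ the vanishing of the (1,2)-component of the reduced
coproduct implies the vanishing of the (2,1)-component; consequently
ker(Δ'_{1,2}|_{A₃}) = ker(Δ'₃). -/
theorem ker_delta12_eq_ker_delta3 (k : Type*) [Field k]
    (A : Type*) [Ring A] [Bialgebra k A]
    (𝒜 : ℕ → Submodule k A) [DirectSum.Decomposition 𝒜]
    (proj : ℕ → (A →ₗ[k] A))
    (hproj : ∀ (i : ℕ) (x : A), proj i x = (DirectSum.decompose 𝒜 x i : A))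
    (hΔ : ∀ n : ℕ, ∀ x ∈ 𝒜 n, Coalgebra.comul (R := k) x ∈
      ⨆ p : ℕ × ℕ, ⨆ _ : p.1 + p.2 = n,
        LinearMap.range (TensorProduct.map (𝒜 p.1).subtype (𝒜 p.2).subtype))
    (hcounit : ∀ n : ℕ, n ≠ 0 → ∀ x ∈ 𝒜 n, Coalgebra.counit (R := k) x = 0)
    (hconn : 𝒜 0 = Submodule.span k {(1 : A)})
    (hinj : ∀ x ∈ 𝒜 2,
      Coalgebra.comul (R := k) x - x ⊗ₜ[k] (1 : A) - (1 : A) ⊗ₜ[k] x = 0 → x = 0) :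
    ∀ α ∈ 𝒜 3,
      (TensorProduct.map (proj 1) (proj 2)
          (Coalgebra.comul (R := k) α - α ⊗ₜ[k] (1 : A) - (1 : A) ⊗ₜ[k] α) = 0 →
        TensorProduct.map (proj 2) (proj 1)
          (Coalgebra.comul (R := k) α - α ⊗ₜ[k] (1 : A) - (1 : A) ⊗ₜ[k] α) = 0) ∧
      (TensorProduct.map (proj 1) (proj 2)
          (Coalgebra.comul (R := k) α - α ⊗ₜ[k] (1 : A) - (1 : A) ⊗ₜ[k] α) = 0 ↔
        Coalgebra.comul (R := k) α - α ⊗ₜ[k] (1 : A) - (1 : A) ⊗ₜ[k] α = 0) := by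
  obtain rfl : proj = gradedProj 𝒜 := funext fun i => LinearMap.ext (hproj i)
  simp only [← reducedComul_def] at hinj ⊢
  have hΔ₂ : ∀ x ∈ 𝒜 2,
      map (gradedProj 𝒜 1) (gradedProj 𝒜 1) (Coalgebra.comul x) = reducedComul k x :=
    fun x hx => by simp [reducedComul_eq_sum hcounit hconn two_ne_zero hx (hΔ 2 x hx)]
  have hΔ₂_inj : Function.Injective
      (map (gradedProj 𝒜 1) (gradedProj 𝒜 1) ∘ₗ Coalgebra.comul ∘ₗ (𝒜 (1 + 1)).subtype) :=
    (injective_iff_map_eq_zero _).2 fun x hx =>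
      Subtype.ext (hinj x x.2 ((hΔ₂ x x.2).symm.trans hx))
  intro α hα
  have hone : (1 : A) ∈ 𝒜 0 := hconn ▸ Submodule.mem_span_singleton_self 1
  have hΔ₃ : reducedComul k α = map (gradedProj 𝒜 1) (gradedProj 𝒜 2) (Coalgebra.comul α) +
      map (gradedProj 𝒜 2) (gradedProj 𝒜 1) (Coalgebra.comul α) := by
    simp [reducedComul_eq_sum hcounit hconn three_ne_zero hα (hΔ 3 α hα),
      Finset.sum_Ico_succ_top]
  have h₁₂ : map (gradedProj 𝒜 1) (gradedProj 𝒜 2) (reducedComul k α) =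
      map (gradedProj 𝒜 1) (gradedProj 𝒜 2) (Coalgebra.comul α) := by
    simp [reducedComul_def, gradedProj_of_mem_ne hone]
  have key (h : map (gradedProj 𝒜 1) (gradedProj 𝒜 2) (reducedComul k α) = 0) :
      reducedComul k α = 0 := by
    rw [h₁₂] at h
    have h₂₁ : map (gradedProj 𝒜 2) (gradedProj 𝒜 1) (Coalgebra.comul α) = 0 :=
      map_gradedProj_comul_eq_zero_of_injective (a := 1) (b := 1) (c := 1) hΔ₂_inj (hΔ 3 α hα) h
    rw [hΔ₃, h, h₂₁, add_zero]
  exact ⟨fun h => by rw [key h, map_zero], key, fun h => by rw [h, map_zero]⟩
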